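/- arXiv:1711.00002 — 6 statements merged into one kernel-verified Lean document; each statement's English description precedes it below -/
import Mathlib

section
/- In a directed graph on vertices {0,1,...,L} where each vertex i ≥ 1 has edges to vertices i - round(2^k) for k = 0, 1, ..., floor(log2(i)), the shortest-path distance between any two vertices i > j is at most log2(i - j) + 1. -/
/-!
Greedy binary descent: if `2 ^ k ≤ i - j < 2 ^ (k + 1)`, the edge `i → i - 2 ^ k` is available
and leaves a gap below `2 ^ k`. So a gap below `2 ^ k` is closed in at most `k` steps, and the gap
`d = i - j` satisfies `d < 2 ^ (⌊log₂ d⌋ + 1)`.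
-/

/-- `stepsTo E m i j` : there is a directed path of exactly `m` edges from `i` to `j`. -/
def stepsTo {α : Type*} (E : α → α → Prop) : ℕ → α → α → Prop
  | 0, i, j => i = j
  | m + 1, i, j => ∃ k, E i k ∧ stepsTo E m k j

/-- Log-DenseNet connection graph on `{0,...,L}`: vertex `i ≥ 1` has an edge to
`i - round(2^k) = i - 2^k` for each `0 ≤ k ≤ ⌊log₂ i⌋`. -/
def logDenseEdge (L : ℕ) (i j : ℕ) : Prop :=
  1 ≤ i ∧ i ≤ L ∧ ∃ k ≤ Nat.log 2 i, j = i - 2 ^ k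

lemma logDenseEdge_sub_pow {L i k : ℕ} (hk : 2 ^ k ≤ i) (hi : i ≤ L) :
    logDenseEdge L i (i - 2 ^ k) :=
  ⟨Nat.one_le_two_pow.trans hk, hi, k, Nat.le_log_of_pow_le one_lt_two hk, rfl⟩

lemma exists_stepsTo_logDenseEdge_of_sub_lt_two_pow (L k : ℕ) :
    ∀ i j, j ≤ i → i ≤ L → i - j < 2 ^ k →
      ∃ m ≤ k, stepsTo (logDenseEdge L) m i j := by
  induction k with
  | zero =>
    intro i j hji _ hlt
    exact ⟨0, le_rfl, by simp only [stepsTo]; omega⟩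
  | succ k ih =>
    intro i j hji hi hlt
    by_cases hsmall : i - j < 2 ^ k
    · obtain ⟨m, hm, hpath⟩ := ih i j hji hi hsmall
      exact ⟨m, hm.trans k.le_succ, hpath⟩
    · have hpow : 2 ^ (k + 1) = 2 ^ k + 2 ^ k := by ring
      obtain ⟨m, hm, hpath⟩ := ih (i - 2 ^ k) j (by omega) (by omega) (by omega)
      exact ⟨m + 1, by omega, i - 2 ^ k, logDenseEdge_sub_pow (by omega) hi, hpath⟩

/-- The shortest-path distance between any two vertices `i > j` is at most `log₂(i-j) + 1`. -/
theorem stmt0 (L i j : ℕ) (hi : i ≤ L) (hij : j < i) :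
    ∃ m : ℕ, stepsTo (logDenseEdge L) m i j ∧ (m : ℝ) ≤ Real.logb 2 ((i : ℝ) - j) + 1 := by
  obtain ⟨m, hm, hpath⟩ := exists_stepsTo_logDenseEdge_of_sub_lt_two_pow L
    (Nat.log 2 (i - j) + 1) i j hij.le hi (Nat.lt_pow_succ_log_self one_lt_two _)
  refine ⟨m, hpath, ?_⟩
  calc (m : ℝ) ≤ Nat.log 2 (i - j) + 1 := by exact_mod_cast hm
    _ ≤ Real.logb 2 ((i - j : ℕ) : ℝ) + 1 := by gcongr; exact Real.natLog_le_logb _ _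
    _ = Real.logb 2 ((i : ℝ) - j) + 1 := by rw [Nat.cast_sub hij.le]
end

section
/- In the half-dense NEAREST connection graph on {0,...,L}, where each vertex i ≥ 2 has edges to all j with i/2 ≤ j < i (and vertex 1 has an edge to 0), the distance between any two vertices i > j ≥ 1 is at most ceil(log2(i/j)) + 1; consequently, the maximum distance over all pairs is O(log L). -/
/-- Half-dense NEAREST graph on `{0,...,L}`: each `i ≥ 2` has edges to all `j` with
`i/2 ≤ j < i`, and vertex `1` has an edge to `0`. -/
def halfEdge (L : ℕ) (i j : ℕ) : Prop :=
  i ≤ L ∧ ((2 ≤ i ∧ i ≤ 2 * j ∧ j < i) ∨ (i = 1 ∧ j = 0))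

lemma halfEdge_of_le_two_mul {L i j : ℕ} (hiL : i ≤ L) (hji : j < i) (hij : i ≤ 2 * j) : halfEdge L i j :=
  ⟨hiL, Or.inl ⟨by omega, hij, hji⟩⟩

lemma exists_stepsTo_halfEdge_two_pow_mul_lt {L j : ℕ} (hj : 1 ≤ j) :
    ∀ i, j < i → i ≤ L → ∃ n, stepsTo (halfEdge L) (n + 1) i j ∧ 2 ^ n * j < i := by
  intro i
  induction i using Nat.strong_induction_on with
  | _ i ih =>
    intro hji hiL
    by_cases hij : i ≤ 2 * j
    · exact ⟨0, ⟨j, halfEdge_of_le_two_mul hiL hji hij, rfl⟩, by simpa using hji⟩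
    · have hjk : j < (i + 1) / 2 := by omega
      have hki : (i + 1) / 2 < i := by omega
      obtain ⟨n, hpath, hlt⟩ := ih _ hki hjk (hki.le.trans hiL)
      refine ⟨n + 1, ⟨_, halfEdge_of_le_two_mul hiL hki (by omega), hpath⟩, ?_⟩
      rw [pow_succ, mul_right_comm]
      omega

lemma natCast_lt_logb_div_of_pow_mul_lt {b x y : ℝ} {n : ℕ} (hb : 1 < b) (hy : 0 < y)
    (h : b ^ n * y < x) : (n : ℝ) < Real.logb b (x / y) := by
  have hx : 0 < x := lt_of_le_of_lt (by positivity) h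
  rw [Real.lt_logb_iff_rpow_lt hb (div_pos hx hy), Real.rpow_natCast, lt_div_iff₀ hy]
  exact h

/-- The distance between any two vertices `i > j ≥ 1` is at most `⌈log₂(i/j)⌉ + 1`;
consequently the maximum distance over all pairs is `O(log L)` (bounded by `log₂ L + 2`). -/
theorem stmt6 (L i j : ℕ) (hi : i ≤ L) (hj : 1 ≤ j) (hij : j < i) :
    (∃ m : ℕ, stepsTo (halfEdge L) m i j ∧
      (m : ℝ) ≤ (⌈Real.logb 2 ((i : ℝ) / j)⌉ : ℝ) + 1) ∧
    (∃ m : ℕ, stepsTo (halfEdge L) m i j ∧ (m : ℝ) ≤ Real.logb 2 L + 2) := by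
  obtain ⟨n, hpath, hlt⟩ := exists_stepsTo_halfEdge_two_pow_mul_lt hj i hij hi
  have hj' : (1 : ℝ) ≤ j := by exact_mod_cast hj
  have hij' : (j : ℝ) < i := by exact_mod_cast hij
  have hn : (n : ℝ) < Real.logb 2 ((i : ℝ) / j) :=
    natCast_lt_logb_div_of_pow_mul_lt one_lt_two (by linarith) (by exact_mod_cast hlt)
  have hratio : (i : ℝ) / j ≤ L :=
    (div_le_self (Nat.cast_nonneg i) hj').trans (by exact_mod_cast hi)
  have hlogL : Real.logb 2 ((i : ℝ) / j) ≤ Real.logb 2 L :=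
    Real.logb_le_logb_of_le one_lt_two (div_pos (by linarith) (by linarith)) hratio
  exact ⟨⟨n + 1, hpath, by push_cast; linarith [Int.le_ceil (Real.logb 2 ((i : ℝ) / j))]⟩,
    ⟨n + 1, hpath, by push_cast; linarith⟩⟩
end

section
/- In the NearestHalfAndLog graph on {1,...,L}, where vertex i has edges to every j with i/2 < j < i, and additionally to round(i/2^k) for k = 1, 2, ..., the distance between any pair of vertices i > j is at most 2. -/
/-- NearestHalfAndLog graph on `{1,...,L}`: vertex `i` has an edge to every `j` with
`i/2 < j < i`, and additionally to `round(i/2^k)` for each `k ≥ 1` with `round(i/2^k) ≥ 1`. -/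
def nhlEdge (L : ℕ) (i j : ℕ) : Prop :=
  1 ≤ j ∧ j < i ∧ i ≤ L ∧
    (i < 2 * j ∨ ∃ k : ℕ, 1 ≤ k ∧ (j : ℤ) = round ((i : ℚ) / 2 ^ k))

theorem round_natCast_div_natCast {K : Type*} [Field K] [LinearOrder K] [IsStrictOrderedRing K]
    [FloorRing K] (n d : ℕ) : round ((n : K) / d) = ((2 * n + d) / (2 * d) : ℕ) := by
  rcases Nat.eq_zero_or_pos d with rfl | hd
  · simp
  have hx : (n : K) / d + 1 / 2 = ((2 * n + d : ℕ) : K) / ((2 * d : ℕ) : K) := by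
    push_cast
    field_simp
  rw [round_eq, hx, Int.floor_div_natCast, Int.floor_natCast]
  norm_cast

/-- `round (i / 2 ^ k)`, computed in `ℕ`. -/
def roundDivTwoPow (i k : ℕ) : ℕ := (2 * i + 2 ^ k) / (2 * 2 ^ k)

theorem round_div_two_pow_eq_roundDivTwoPow (i k : ℕ) :
    round ((i : ℚ) / 2 ^ k) = roundDivTwoPow i k := by
  exact_mod_cast round_natCast_div_natCast (K := ℚ) i (2 ^ k)

theorem exists_roundDivTwoPow_mem_Ico {i j : ℕ} (hj : 1 ≤ j) (hji : 2 * j ≤ i) :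
    ∃ k, 1 ≤ k ∧ roundDivTwoPow i k ∈ Set.Ico j (2 * j) := by
  obtain ⟨m, hm⟩ : ∃ m, 2 * j = m + 1 := ⟨2 * j - 1, by omega⟩
  have hm0 : 0 < m := by omega
  -- `roundDivTwoPow i k ≥ j` iff `2 ^ k * (2 * j - 1) ≤ 2 * i`, so the maximal such `k` is a `Nat.log`.
  set k := Nat.log 2 (2 * i / m)
  have hlow : 2 ^ k * m ≤ 2 * i :=
    (Nat.le_div_iff_mul_le hm0).mp (Nat.pow_log_le_self 2 (Nat.div_pos (by omega) hm0).ne')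
  have hhigh : 2 * i < 2 ^ (k + 1) * m :=
    (Nat.div_lt_iff_lt_mul hm0).mp (Nat.lt_pow_succ_log_self (by norm_num) _)
  have hpos : 0 < 2 ^ k := by positivity
  refine ⟨k, Nat.log_pos (by norm_num) ((Nat.le_div_iff_mul_le hm0).mpr (by omega)), ?_, ?_⟩
  · rw [roundDivTwoPow, Nat.le_div_iff_mul_le (by positivity)]
    nlinarith
  · rw [roundDivTwoPow, Nat.div_lt_iff_lt_mul (by positivity)]
    rw [pow_succ] at hhigh
    nlinarith

section nhlEdge

variable {L i j : ℕ}

theorem nhlEdge_of_lt_two_mul (hj : 1 ≤ j) (hji : j < i) (hi : i ≤ L) (h : i < 2 * j) :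
    nhlEdge L i j :=
  ⟨hj, hji, hi, Or.inl h⟩

theorem nhlEdge_roundDivTwoPow {k : ℕ} (hk : 1 ≤ k) (hr : 1 ≤ roundDivTwoPow i k)
    (hri : roundDivTwoPow i k < i) (hi : i ≤ L) : nhlEdge L i (roundDivTwoPow i k) :=
  ⟨hr, hri, hi, Or.inr ⟨k, hk, (round_div_two_pow_eq_roundDivTwoPow i k).symm⟩⟩

end nhlEdge

/-- The distance between any pair of vertices `i > j ≥ 1` is at most `2`. -/
theorem stmt8 (L i j : ℕ) (hi : i ≤ L) (hj : 1 ≤ j) (hij : j < i) :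
    ∃ m ≤ 2, stepsTo (nhlEdge L) m i j := by
  rcases lt_or_ge i (2 * j) with hlt | hge
  · exact ⟨1, by norm_num, j, nhlEdge_of_lt_two_mul hj hij hi hlt, rfl⟩
  obtain ⟨k, hk, hjr, hr⟩ := exists_roundDivTwoPow_mem_Ico hj hge
  have hir : nhlEdge L i (roundDivTwoPow i k) :=
    nhlEdge_roundDivTwoPow hk (by omega) (by omega) hi
  rcases hjr.eq_or_lt with heq | hjr
  · exact ⟨1, by norm_num, _, hir, heq.symm⟩
  · exact ⟨2, le_rfl, _, hir, j, nhlEdge_of_lt_two_mul hj hjr (by omega) hr, rfl⟩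
end

section
/- One level of the lglg_conn construction on a segment of n layers adds exactly n + 0.5|K|² - 1.5|K| connections, which is strictly less than 1.5n + sqrt(n) + 3.125, where |K| = 1 + ceil((n-1)/floor(sqrt(n))). -/
/-! With `s = ⌊√n⌋` and `c = K - 1 = ⌈(n-1)/s⌉`, the count equals `n + c(c-1)/2 - 1`.
Minimality of the ceiling gives `s(c-1) ≤ n - 2`, hence `c ≤ s + 2` because `n < (s+1)²`, and then
`c(c-1) ≤ c(s+1) = s(c-1) + s + c ≤ n + 2s ≤ n + 2√n`. -/

/-- The number of gaps between consecutive key layers, `|K| - 1`. -/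
noncomputable def keyGapCount (n : ℕ) : ℤ := ⌈((n : ℝ) - 1) / Nat.sqrt n⌉

lemma sqrt_mul_keyGapCount_sub_one_le (n : ℕ) (hn : 0 < n) :
    (Nat.sqrt n : ℤ) * (keyGapCount n - 1) ≤ n - 2 := by
  have hs : (0 : ℝ) < Nat.sqrt n := by exact_mod_cast Nat.sqrt_pos.mpr hn
  have hc : (keyGapCount n : ℝ) < ((n : ℝ) - 1) / Nat.sqrt n + 1 := Int.ceil_lt_add_one _
  have hlt : ((Nat.sqrt n * (keyGapCount n - 1) : ℤ) : ℝ) < ((n - 1 : ℤ) : ℝ) := by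
    push_cast
    rw [← sub_lt_iff_lt_add, lt_div_iff₀ hs, mul_comm] at hc
    exact hc
  have := Int.cast_lt.mp hlt
  omega

lemma keyGapCount_mul_sub_one_le (n : ℕ) (hn : 0 < n) :
    keyGapCount n * (keyGapCount n - 1) ≤ n + 2 * Nat.sqrt n := by
  have hmul := sqrt_mul_keyGapCount_sub_one_le n hn
  have hs : (0 : ℤ) < Nat.sqrt n := by exact_mod_cast Nat.sqrt_pos.mpr hn
  have hn_lt : (n : ℤ) < (Nat.sqrt n + 1) * (Nat.sqrt n + 1) := by
    exact_mod_cast Nat.lt_succ_sqrt n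
  have hc_nonneg : 0 ≤ keyGapCount n := Int.ceil_nonneg <| div_nonneg
    (sub_nonneg.mpr (by exact_mod_cast hn)) (Nat.cast_nonneg _)
  have hc_le : keyGapCount n ≤ Nat.sqrt n + 2 := by nlinarith
  nlinarith [mul_nonneg hc_nonneg (sub_nonneg.mpr hc_le)]

/-- One level of the `lglg_conn` construction on a segment of `n` layers adds exactly
`n + 0.5|K|² - 1.5|K|` connections (`0.5|K|(|K|-1)` from the key clique plus `n - |K|`
from non-key layers), which is strictly less than `1.5n + √n + 3.125`, where
`|K| = 1 + ⌈(n-1)/⌊√n⌋⌉`. -/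
theorem stmt10 (n : ℕ) (hn : 2 ≤ n) (K : ℝ)
    (hK : K = 1 + (⌈((n : ℝ) - 1) / (Nat.sqrt n : ℝ)⌉ : ℝ)) :
    0.5 * K * (K - 1) + ((n : ℝ) - K) = (n : ℝ) + 0.5 * K ^ 2 - 1.5 * K ∧
    (n : ℝ) + 0.5 * K ^ 2 - 1.5 * K < 1.5 * n + Real.sqrt n + 3.125 := by
  refine ⟨by ring, ?_⟩
  have hK' : K = 1 + keyGapCount n := hK
  have hbound : ((keyGapCount n * (keyGapCount n - 1) : ℤ) : ℝ) ≤ ((n + 2 * Nat.sqrt n : ℤ) : ℝ) :=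
    Int.cast_le.mpr (keyGapCount_mul_sub_one_le n (by omega))
  push_cast at hbound
  have hsqrt : (Nat.sqrt n : ℝ) ≤ Real.sqrt n := Real.nat_sqrt_le_real_sqrt
  subst hK'
  linarith
end

section
/- In the LogLog-DenseNet connection graph on {0,...,L}, the distance between any two vertices is at most 2 + log2(log2(L+1)) (up to an additive constant), i.e., the maximum backpropagation distance is at most the recursion depth of lglg_conn(0,L) plus one. -/
/-- Key set of the segment `[s,t]`: `{s} ∪ {t - kδ : t - kδ ≥ s}` with `δ = ⌊√(t-s+1)⌋`. -/
def keySet (s t : ℤ) : Finset ℤ :=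
  insert s (((Finset.range (t - s + 1).toNat).image
    fun k : ℕ => t - (k : ℤ) * (Nat.sqrt (t - s + 1).toNat : ℤ)).filter (s ≤ ·))

/-- `a` and `b` are consecutive key vertices of segment `[s,t]`. -/
def consecKeys (s t a b : ℤ) : Prop :=
  a ∈ keySet s t ∧ b ∈ keySet s t ∧ a < b ∧ ∀ c ∈ keySet s t, ¬(a < c ∧ c < b)

/-- Segments appearing in the recursion tree of `lglg_conn(0, L)`. -/
inductive Seg (L : ℕ) : ℤ → ℤ → Prop where
  | root : Seg L 0 L
  | child (s t a b : ℤ) : Seg L s t → 3 ≤ t - s + 1 → consecKeys s t a b → Seg L a b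

/-- Edges of the LogLog-DenseNet connection graph on `{0,...,L}`: the initialization
edges `i → i-1`, the key cliques (a), and the edges to the preceding key vertex (b). -/
inductive LLEdge (L : ℕ) : ℤ → ℤ → Prop where
  | init (i : ℤ) : 1 ≤ i → i ≤ L → LLEdge L i (i - 1)
  | key (s t i j : ℤ) : Seg L s t → 2 ≤ t - s + 1 → i ∈ keySet s t → j ∈ keySet s t →
      j < i → LLEdge L i j
  | prev (s t a b j : ℤ) : Seg L s t → 2 ≤ t - s + 1 → consecKeys s t a b →
      a < j → j ≤ b → LLEdge L j a

/-!
Segments of the recursion tree shrink doubly exponentially: a segment of length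
`t - s ≤ 2 ^ 2 ^ (d + 1)` has key spacing `δ ≤ 2 ^ 2 ^ d`, and consecutive keys are at most `δ`
apart. From a key vertex, one edge of the key clique reaches the right end of the child segment
containing the target, which is a key vertex one level down; so in a segment of length at most
`2 ^ 2 ^ d`, `d + 2` steps suffice from a key. A non-key vertex `i` lies strictly between
consecutive keys `a < i < b`: either the target is at most `a`, reached in one step along the
edge `i → a`, or both endpoints lie in the child `[a, b]`.
Taking `d = ⌈log₂ ⌈log₂ (L + 1)⌉⌉` gives the bound.
-/

section Reachability

variable {α : Type*} {E : α → α → Prop}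

theorem stepsTo_add {m n : ℕ} {i k j : α} (h₁ : stepsTo E m i k) (h₂ : stepsTo E n k j) :
    stepsTo E (m + n) i j := by
  induction m generalizing i with
  | zero => cases h₁; simpa using h₂
  | succ m ih =>
    obtain ⟨l, hil, hlk⟩ := h₁
    rw [Nat.add_right_comm]
    exact ⟨l, hil, ih hlk⟩

def ReachableWithin (E : α → α → Prop) (k : ℕ) (i j : α) : Prop :=
  ∃ m ≤ k, stepsTo E m i j

namespace ReachableWithin

theorem refl (k : ℕ) (i : α) : ReachableWithin E k i i := ⟨0, k.zero_le, rfl⟩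

theorem single {i j : α} (h : E i j) : ReachableWithin E 1 i j := ⟨1, le_rfl, j, h, rfl⟩

theorem mono {k k' : ℕ} {i j : α} (h : ReachableWithin E k i j) (hk : k ≤ k') :
    ReachableWithin E k' i j :=
  let ⟨m, hm, hp⟩ := h; ⟨m, hm.trans hk, hp⟩

theorem trans {p q : ℕ} {i k j : α} (h₁ : ReachableWithin E p i k)
    (h₂ : ReachableWithin E q k j) : ReachableWithin E (p + q) i j :=
  let ⟨m, hm, hp⟩ := h₁
  let ⟨n, hn, hq⟩ := h₂
  ⟨m + n, Nat.add_le_add hm hn, stepsTo_add hp hq⟩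

end ReachableWithin

end Reachability

def keySpacing (s t : ℤ) : ℤ := Nat.sqrt (t - s + 1).toNat

section KeySet

variable {s t a b x : ℤ}

theorem mem_keySet : x ∈ keySet s t ↔
    x = s ∨ s ≤ x ∧ ∃ k : ℕ, k < (t - s + 1).toNat ∧ x = t - k * keySpacing s t := by
  simp only [keySet, keySpacing, Finset.mem_insert, Finset.mem_filter, Finset.mem_image,
    Finset.mem_range]
  tauto

theorem one_le_keySpacing (h : s ≤ t) : 1 ≤ keySpacing s t := by
  have : 1 ≤ Nat.sqrt (t - s + 1).toNat := Nat.le_sqrt.2 (by omega)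
  unfold keySpacing
  exact_mod_cast this

theorem keySpacing_mul_self_le (h : s ≤ t) : keySpacing s t * keySpacing s t ≤ t - s + 1 := by
  have := Nat.sqrt_le (t - s + 1).toNat
  unfold keySpacing
  zify [show 0 ≤ t - s + 1 by omega] at this
  simpa [Int.toNat_of_nonneg (show 0 ≤ t - s + 1 by omega)] using this

theorem left_mem_keySet (s t : ℤ) : s ∈ keySet s t := by
  simp [keySet]

theorem right_mem_keySet (h : s ≤ t) : t ∈ keySet s t :=
  mem_keySet.2 <| .inr ⟨h, 0, by omega, by simp⟩

theorem left_le_of_mem_keySet (hx : x ∈ keySet s t) : s ≤ x :=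
  (mem_keySet.1 hx).elim ge_of_eq And.left

theorem le_right_of_mem_keySet (hx : x ∈ keySet s t) (h : s ≤ t) : x ≤ t := by
  rcases mem_keySet.1 hx with rfl | ⟨-, k, -, rfl⟩
  · exact h
  · have : 0 ≤ (k : ℤ) * keySpacing s t := by unfold keySpacing; positivity
    omega

theorem exists_mem_keySet_gt_le (hsa : s ≤ a) (hat : a < t) :
    ∃ c ∈ keySet s t, a < c ∧ c ≤ a + keySpacing s t := by
  set δ := keySpacing s t
  have hδ : 1 ≤ δ := one_le_keySpacing (by omega)
  set k := (t - a - 1) / δ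
  have hk : 0 ≤ k := Int.ediv_nonneg (by omega) (by omega)
  have hkδ : k * δ ≤ t - a - 1 := Int.ediv_mul_le _ (by omega)
  have hkδ' : t - a - 1 < (k + 1) * δ := Int.lt_ediv_add_one_mul_self _ (by omega)
  refine ⟨t - k * δ, mem_keySet.2 <| .inr ⟨by omega, k.toNat, ?_, by simp [δ, k, hk]⟩,
    by omega, by linarith⟩
  have : k ≤ k * δ := le_mul_of_one_le_right hk hδ
  omega

theorem exists_consecKeys_of_notMem (hsx : s ≤ x) (hxt : x ≤ t) (hx : x ∉ keySet s t) :
    ∃ a b, consecKeys s t a b ∧ a < x ∧ x < b := by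
  have hsx' : s < x := lt_of_le_of_ne hsx (by rintro rfl; exact hx (left_mem_keySet s t))
  have hxt' : x < t := lt_of_le_of_ne hxt (by rintro rfl; exact hx (right_mem_keySet hsx))
  set A := (keySet s t).filter (· < x)
  set B := (keySet s t).filter (x < ·)
  have hA : A.Nonempty := ⟨s, Finset.mem_filter.2 ⟨left_mem_keySet s t, hsx'⟩⟩
  have hB : B.Nonempty := ⟨t, Finset.mem_filter.2 ⟨right_mem_keySet (by omega), hxt'⟩⟩
  obtain ⟨ha, hax⟩ := Finset.mem_filter.1 (A.max'_mem hA)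
  obtain ⟨hb, hxb⟩ := Finset.mem_filter.1 (B.min'_mem hB)
  refine ⟨A.max' hA, B.min' hB, ⟨ha, hb, hax.trans hxb, ?_⟩, hax, hxb⟩
  rintro c hc ⟨hac, hcb⟩
  rcases lt_trichotomy c x with h | rfl | h
  · exact (A.le_max' c (Finset.mem_filter.2 ⟨hc, h⟩)).not_gt hac
  · exact hx hc
  · exact (B.min'_le c (Finset.mem_filter.2 ⟨hc, h⟩)).not_gt hcb

namespace consecKeys

theorem le_of_mem (h : consecKeys s t a b) {e : ℤ} (he : e ∈ keySet s t) (hae : a < e) :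
    b ≤ e :=
  not_lt.1 fun heb => h.2.2.2 e he ⟨hae, heb⟩

theorem bounds (h : consecKeys s t a b) : s ≤ a ∧ a < b ∧ b ≤ t := by
  obtain ⟨ha, hb, hab, -⟩ := h
  have hsa := left_le_of_mem_keySet ha
  rcases mem_keySet.1 hb with rfl | ⟨-, k, hk, -⟩
  · omega
  · exact ⟨hsa, hab, le_right_of_mem_keySet hb (by omega)⟩

theorem sub_le_keySpacing (h : consecKeys s t a b) : b - a ≤ keySpacing s t := by
  obtain ⟨hsa, hab, hbt⟩ := h.bounds
  obtain ⟨c, hc, hac, hca⟩ := exists_mem_keySet_gt_le hsa (hab.trans_le hbt)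
  linarith [h.le_of_mem hc hac]

theorem three_le_sub (h : consecKeys s t a b) (hab : a + 1 < b) : 3 ≤ t - s := by
  have hδ := h.sub_le_keySpacing
  have := keySpacing_mul_self_le (show s ≤ t by linarith [h.bounds])
  nlinarith

theorem sub_le_of_sub_le_sq (h : consecKeys s t a b) {N : ℕ} (hN : t - s ≤ (N : ℤ) ^ 2) :
    b - a ≤ N := by
  obtain ⟨hsa, hab, hbt⟩ := h.bounds
  have hδ := h.sub_le_keySpacing
  have := keySpacing_mul_self_le (show s ≤ t by omega)
  by_contra! hNab
  have hNδ : (N : ℤ) + 1 ≤ keySpacing s t := by omega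
  nlinarith [mul_le_mul hNδ hNδ (by positivity) (by omega)]

theorem exists_sub_le_two_pow_two_pow (h : consecKeys s t a b) (hab : a + 1 < b) {d : ℕ}
    (hd : t - s ≤ 2 ^ 2 ^ d) : ∃ d', d = d' + 1 ∧ b - a ≤ 2 ^ 2 ^ d' := by
  cases d with
  | zero => have := h.three_le_sub hab; norm_num at hd; omega
  | succ d =>
    refine ⟨d, rfl, ?_⟩
    rw [pow_succ, pow_mul] at hd
    exact_mod_cast h.sub_le_of_sub_le_sq (N := 2 ^ 2 ^ d) (by exact_mod_cast hd)

end consecKeys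

end KeySet

section Graph

variable {L : ℕ} {s t a b i j : ℤ}

theorem Seg.le (hseg : Seg L s t) : s ≤ t := by
  induction hseg with
  | root => exact Int.natCast_nonneg L
  | child s t a b _ _ h _ => exact h.bounds.2.1.le

theorem Seg.of_consecKeys (hseg : Seg L s t) (h : consecKeys s t a b) (hab : a + 1 < b) :
    Seg L a b :=
  .child s t a b hseg (by linarith [h.three_le_sub hab]) h

theorem reachableWithin_one_of_mem_keySet (hseg : Seg L s t) (hi : i ∈ keySet s t)
    (hj : j ∈ keySet s t) (hji : j ≤ i) : ReachableWithin (LLEdge L) 1 i j := by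
  rcases hji.eq_or_lt with rfl | hji
  · exact .refl 1 j
  · have hit := le_right_of_mem_keySet hi hseg.le
    have hsj := left_le_of_mem_keySet hj
    exact .single (.key s t i j hseg (by omega) hi hj hji)

theorem reachableWithin_of_mem_keySet (d : ℕ) (hseg : Seg L s t) (hd : t - s ≤ 2 ^ 2 ^ d)
    (hi : i ∈ keySet s t) (hsj : s ≤ j) (hji : j ≤ i) :
    ReachableWithin (LLEdge L) (d + 2) i j := by
  induction d using Nat.strong_induction_on generalizing s t i with
  | _ d ih =>
  by_cases hj : j ∈ keySet s t
  · exact (reachableWithin_one_of_mem_keySet hseg hi hj hji).mono (by omega)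
  obtain ⟨a, b, hkeys, haj, hjb⟩ :=
    exists_consecKeys_of_notMem hsj (hji.trans (le_right_of_mem_keySet hi hseg.le)) hj
  obtain ⟨d, rfl, hd'⟩ := hkeys.exists_sub_le_two_pow_two_pow (by omega) hd
  have hib : ReachableWithin (LLEdge L) 1 i b :=
    reachableWithin_one_of_mem_keySet hseg hi hkeys.2.1
      (hkeys.le_of_mem hi (haj.trans_le hji))
  have hbj := ih d (by omega) (hseg.of_consecKeys hkeys (by omega)) hd'
    (right_mem_keySet hkeys.bounds.2.1.le) haj.le hjb.le
  exact (hib.trans hbj).mono (by omega)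

theorem reachableWithin_of_le (d : ℕ) (hseg : Seg L s t) (hd : t - s ≤ 2 ^ 2 ^ d)
    (hsj : s ≤ j) (hji : j ≤ i) (hit : i ≤ t) : ReachableWithin (LLEdge L) (d + 3) i j := by
  induction d using Nat.strong_induction_on generalizing s t with
  | _ d ih =>
  by_cases hi : i ∈ keySet s t
  · exact (reachableWithin_of_mem_keySet d hseg hd hi hsj hji).mono (by omega)
  obtain ⟨a, b, hkeys, hai, hib⟩ := exists_consecKeys_of_notMem (hsj.trans hji) hit hi
  rcases le_or_gt j a with hja | haj
  · obtain ⟨hsa, -, hbt⟩ := hkeys.bounds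
    have hia : ReachableWithin (LLEdge L) 1 i a :=
      .single (.prev s t a b i hseg (by omega) hkeys hai hib.le)
    have haj := reachableWithin_of_mem_keySet d hseg hd hkeys.1 hsj hja
    exact (hia.trans haj).mono (by omega)
  · obtain ⟨d, rfl, hd'⟩ := hkeys.exists_sub_le_two_pow_two_pow (by omega) hd
    exact (ih d (by omega) (hseg.of_consecKeys hkeys (by omega)) hd' haj.le hib.le).mono
      (by omega)

end Graph

theorem natCast_clog_lt_logb_add_one {b : ℕ} (hb : 1 < b) {n : ℕ} (hn : 1 ≤ n) :
    (Nat.clog b n : ℝ) < Real.logb b n + 1 := by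
  rw [← Real.natCeil_logb_natCast]
  exact Nat.ceil_lt_add_one
    (Real.logb_nonneg (by exact_mod_cast hb) (by exact_mod_cast hn))

theorem exists_le_two_pow_two_pow (L : ℕ) (hL : 1 ≤ L) :
    ∃ d : ℕ, L ≤ 2 ^ 2 ^ d ∧ (d : ℝ) ≤ 2 + Real.logb 2 (Real.logb 2 ((L : ℝ) + 1)) := by
  set c := Nat.clog 2 (L + 1)
  refine ⟨Nat.clog 2 c, ?_, ?_⟩
  · calc L ≤ 2 ^ c := (Nat.lt_succ_self L).le.trans (Nat.le_pow_clog one_lt_two _)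
      _ ≤ 2 ^ 2 ^ Nat.clog 2 c := Nat.pow_le_pow_right two_pos (Nat.le_pow_clog one_lt_two _)
  set x := Real.logb 2 ((L : ℝ) + 1)
  have hx : 1 ≤ x := by
    rw [Real.le_logb_iff_rpow_le one_lt_two (by positivity), Real.rpow_one]
    exact_mod_cast Nat.succ_le_succ hL
  have hc1 : 1 ≤ c := Nat.clog_pos one_lt_two (by omega)
  have hcx : (c : ℝ) < x + 1 := by
    simpa [x] using natCast_clog_lt_logb_add_one one_lt_two (Nat.le_add_left 1 L)
  have hd := natCast_clog_lt_logb_add_one one_lt_two hc1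
  calc (Nat.clog 2 c : ℝ) ≤ Real.logb 2 c + 1 := hd.le
    _ ≤ Real.logb 2 (2 * x) + 1 := by
        have : (0 : ℝ) < c := by exact_mod_cast hc1
        gcongr <;> linarith
    _ = 2 + Real.logb 2 x := by
        rw [Real.logb_mul two_ne_zero (by positivity), Real.logb_self_eq_one one_lt_two]; ring

/-- In the LogLog-DenseNet graph on `{0,...,L}`, the distance between any two vertices is
at most `2 + log₂ log₂ (L+1)` up to an additive constant. -/
theorem stmt12 : ∃ C : ℝ, ∀ L : ℕ, 2 ≤ L → ∀ i j : ℤ, 0 ≤ j → j < i → i ≤ L →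
    ∃ m : ℕ, stepsTo (LLEdge L) m i j ∧
      (m : ℝ) ≤ 2 + Real.logb 2 (Real.logb 2 ((L : ℝ) + 1)) + C := by
  refine ⟨3, fun L hL i j hj hji hiL => ?_⟩
  obtain ⟨d, hLd, hd⟩ := exists_le_two_pow_two_pow L (by omega)
  have hLd' : (L : ℤ) - 0 ≤ 2 ^ 2 ^ d := by rw [sub_zero]; exact_mod_cast hLd
  obtain ⟨m, hm, hp⟩ := reachableWithin_of_le d .root hLd' hj hji.le hiL
  refine ⟨m, hp, ?_⟩
  have : (m : ℝ) ≤ d + 3 := by exact_mod_cast hm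
  linarith
end

section
/- If every vertex i in a connection graph on {0,...,L} has out-degree (number of input connections) at most d, then the maximum shortest-path distance between some pair of vertices is at least log_{d+1}(L) - 1; in particular, with d = 1 + log2 L inputs per layer, no connection scheme can achieve maximum backpropagation distance below Ω(log L / log log L). -/
section Reach

variable {α : Type*} (E : α → α → Prop)

def reachWithin (r : ℕ) (i : α) : Set α := {j | ∃ m ≤ r, stepsTo E m i j}

lemma reachWithin_zero (i : α) : reachWithin E 0 i = {i} := by
  ext j
  simp [reachWithin, stepsTo, eq_comm]

lemma reachWithin_succ (r : ℕ) (i : α) :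
    reachWithin E (r + 1) i = insert i (⋃ k ∈ {k | E i k}, reachWithin E r k) := by
  ext j
  simp only [reachWithin, Set.mem_ofPred_eq, Set.mem_insert_iff, Set.mem_iUnion, exists_prop]
  constructor
  · rintro ⟨_ | m, hm, hij⟩
    · exact Or.inl hij.symm
    · obtain ⟨k, hik, hkj⟩ := hij
      exact Or.inr ⟨k, hik, m, by omega, hkj⟩
  · rintro (rfl | ⟨k, hik, m, hm, hkj⟩)
    · exact ⟨0, Nat.zero_le _, rfl⟩
    · exact ⟨m + 1, by omega, k, hik, hkj⟩

variable {E}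

lemma encard_reachWithin_le {d : ℕ} (hdeg : ∀ i, {j | E i j}.encard ≤ d) (r : ℕ) (i : α) :
    (reachWithin E r i).encard ≤ ((d + 1) ^ r : ℕ) := by
  induction r generalizing i with
  | zero => simp [reachWithin_zero]
  | succ r ih =>
    have hfin : {k | E i k}.Finite := Set.finite_of_encard_le_coe (hdeg i)
    have hcard : (hfin.toFinset.card : ℕ∞) ≤ d := by
      rw [← hfin.encard_eq_coe_toFinset_card]
      exact hdeg i
    have hunion : (⋃ k ∈ {k | E i k}, reachWithin E r k).encard ≤ (d * (d + 1) ^ r : ℕ) :=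
      calc (⋃ k ∈ {k | E i k}, reachWithin E r k).encard
          = (⋃ k ∈ hfin.toFinset, reachWithin E r k).encard := by simp
        _ ≤ ∑ k ∈ hfin.toFinset, (reachWithin E r k).encard :=
          hfin.toFinset.set_encard_biUnion_le _
        _ ≤ hfin.toFinset.card • ((d + 1) ^ r : ℕ) :=
          Finset.sum_le_card_nsmul _ _ _ fun k _ => ih k
        _ ≤ (d * (d + 1) ^ r : ℕ) := by
          rw [nsmul_eq_mul]
          push_cast
          gcongr
    calc (reachWithin E (r + 1) i).encard
        ≤ (⋃ k ∈ {k | E i k}, reachWithin E r k).encard + 1 := by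
          rw [reachWithin_succ]
          exact Set.encard_insert_le _ _
      _ ≤ (d * (d + 1) ^ r : ℕ) + 1 := by gcongr
      _ ≤ ((d + 1) ^ (r + 1) : ℕ) := by
          have : 1 ≤ (d + 1) ^ r := Nat.one_le_pow _ _ d.succ_pos
          exact_mod_cast (by rw [pow_succ]; nlinarith : d * (d + 1) ^ r + 1 ≤ (d + 1) ^ (r + 1))

end Reach

lemma exists_le_forall_stepsTo_lt {E : ℕ → ℕ → Prop} {d r L : ℕ}
    (hdeg : ∀ i, {j | E i j}.encard ≤ d) (hL : (d + 1) ^ r ≤ L) :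
    ∃ j ≤ L, ∀ m, stepsTo E m L j → r < m := by
  have hnot : ¬ Set.Iic L ⊆ reachWithin E r L := fun hsub => by
    have := (Set.encard_le_encard hsub).trans (encard_reachWithin_le hdeg r L)
    rw [← Finset.coe_Iic, Set.encard_coe_eq_coe_finsetCard, Nat.card_Iic] at this
    norm_cast at this
    omega
  obtain ⟨j, hjL, hj⟩ := Set.not_subset.1 hnot
  exact ⟨j, hjL, fun m hm => Nat.lt_of_not_le fun hmr => hj ⟨m, hmr, hm⟩⟩

theorem stmt15_general (L d : ℕ) (hL : 1 ≤ L) (E : ℕ → ℕ → Prop)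
    (hdeg : ∀ i, Set.ncard {j | E i j} ≤ d) (hdown : ∀ i j, E i j → j < i) :
    ∃ j ≤ L, ∀ m : ℕ, stepsTo E m L j → Real.logb ((d : ℝ) + 1) L - 1 ≤ m := by
  have hdeg' : ∀ i, {j | E i j}.encard ≤ d := fun i => by
    have hfin : {j | E i j}.Finite := (Set.finite_Iio i).subset fun j => hdown i j
    rw [← hfin.cast_ncard_eq]
    exact_mod_cast hdeg i
  set N := Nat.log (d + 1) L
  have hpow : (d + 1) ^ (N - 1) ≤ L :=
    (Nat.pow_le_pow_right d.succ_pos (N.sub_le 1)).trans (Nat.pow_log_le_self _ (by omega))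
  obtain ⟨j, hjL, hj⟩ := exists_le_forall_stepsTo_lt hdeg' hpow
  refine ⟨j, hjL, fun m hm => ?_⟩
  have hNm : (N : ℝ) ≤ m := by
    have := hj m hm
    exact_mod_cast (by omega : N ≤ m)
  have hlog : Real.logb ((d : ℝ) + 1) L < N + 1 := by
    have := Nat.lt_floor_add_one (Real.logb ((d + 1 : ℕ) : ℝ) L)
    rwa [Real.natFloor_logb_natCast, Nat.cast_add_one] at this
  linarith

/-- If every vertex of a connection graph on `{0,...,L}` has at most `d` input connections
(all pointing to earlier vertices), then some vertex `j` is at shortest-path distance at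
least `log_{d+1}(L) - 1` from vertex `L`. -/
theorem stmt15 (L d : ℕ) (hd : 1 ≤ d) (hL : 1 ≤ L) (E : ℕ → ℕ → Prop)
    (hdeg : ∀ i, Set.ncard {j | E i j} ≤ d) (hdown : ∀ i j, E i j → j < i) :
    ∃ j ≤ L, ∀ m : ℕ, stepsTo E m L j → Real.logb ((d : ℝ) + 1) L - 1 ≤ m :=
  stmt15_general L d hL E hdeg hdown
end
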